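/- arXiv:1201.5614 — 2 statements merged into one kernel-verified Lean document; each statement's English description precedes it below -/
import Mathlib

section
/- Let κ, τ, M > 0 be real constants. For N ∈ ℕ and μ > 0 define ρ(N,μ) = 1 − max{μ/M, 2μ(N+1)/(κτ)} and Θ(N,μ) = (1 − ρ(N,μ))·M + (1 + ρ(N,μ))·κτ/(N+1) + μ. Then for every θ > 0 there exist N ∈ ℕ and μ > 0 such that Θ(N,μ) ≤ θ and ρ(N,μ) > 0. -/
/-!
For fixed `N`, both `ρ(N, ·)` and `Θ(N, ·)` are continuous, with `ρ(N, 0) = 1` and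
`Θ(N, 0) = 2κτ/(N+1)`. So first take `N` so large that `2κτ/(N+1) < θ`, then `μ > 0` so small
that `Θ(N, μ)` stays below `θ` and `ρ(N, μ)` stays positive.
-/

open Filter Topology

lemma exists_nat_div_succ_lt (c : ℝ) {θ : ℝ} (hθ : 0 < θ) : ∃ N : ℕ, c / (N + 1) < θ := by
  have h : Tendsto (fun N : ℕ => c / ((N : ℝ) + 1)) atTop (𝓝 0) := by
    simpa only [mul_one_div, mul_zero] using
      tendsto_one_div_add_atTop_nhds_zero_nat.const_mul c
  exact (h.eventually (gt_mem_nhds hθ)).exists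

lemma exists_pos_lt_and_pos_of_continuous {f g : ℝ → ℝ} (hf : Continuous f)
    (hg : Continuous g) {θ : ℝ} (hfθ : f 0 < θ) (hg0 : 0 < g 0) :
    ∃ μ : ℝ, 0 < μ ∧ f μ < θ ∧ 0 < g μ := by
  have hnear : ∀ᶠ μ in 𝓝[>] 0, f μ < θ ∧ 0 < g μ :=
    nhdsWithin_le_nhds <| ((hf.tendsto 0).eventually (gt_mem_nhds hfθ)).and
      ((hg.tendsto 0).eventually (lt_mem_nhds hg0))
  obtain ⟨μ, hfg, hμ⟩ := (hnear.and self_mem_nhdsWithin).exists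
  exact ⟨μ, hμ, hfg⟩

theorem stmt_0_general (κ τ M : ℝ)
    (ρ Θ : ℕ → ℝ → ℝ)
    (hρ : ∀ (N : ℕ) (μ : ℝ), ρ N μ = 1 - max (μ / M) (2 * μ * (N + 1) / (κ * τ)))
    (hΘ : ∀ (N : ℕ) (μ : ℝ),
      Θ N μ = (1 - ρ N μ) * M + (1 + ρ N μ) * (κ * τ / (N + 1)) + μ) :
    ∀ θ : ℝ, 0 < θ → ∃ (N : ℕ) (μ : ℝ), 0 < μ ∧ Θ N μ ≤ θ ∧ 0 < ρ N μ := by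
  intro θ hθ
  obtain ⟨N, hN⟩ := exists_nat_div_succ_lt (2 * (κ * τ)) hθ
  have hρ_cont : Continuous (ρ N) := by
    rw [funext (hρ N)]
    fun_prop
  have hΘ_cont : Continuous (Θ N) := by
    rw [funext (hΘ N)]
    fun_prop
  have hρ_zero : ρ N 0 = 1 := by simp [hρ]
  have hΘ_zero : Θ N 0 = 2 * (κ * τ) / (N + 1) := by
    rw [hΘ, hρ_zero]
    ring
  obtain ⟨μ, hμ, hΘμ, hρμ⟩ := exists_pos_lt_and_pos_of_continuous hΘ_cont hρ_cont
    (hΘ_zero ▸ hN) (hρ_zero ▸ one_pos)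
  exact ⟨N, μ, hμ, hΘμ.le, hρμ⟩

/-- Lemma 3.2: for every precision θ > 0 there exist N and μ > 0 such that
Θ(N,μ) ≤ θ and ρ(N,μ) > 0, where
ρ(N,μ) = 1 − max{μ/M, 2μ(N+1)/(κτ)} and
Θ(N,μ) = (1 − ρ(N,μ))·M + (1 + ρ(N,μ))·κτ/(N+1) + μ. -/
theorem stmt_0 (κ τ M : ℝ) (hκ : 0 < κ) (hτ : 0 < τ) (hM : 0 < M)
    (ρ Θ : ℕ → ℝ → ℝ)
    (hρ : ∀ (N : ℕ) (μ : ℝ), ρ N μ = 1 - max (μ / M) (2 * μ * (N + 1) / (κ * τ)))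
    (hΘ : ∀ (N : ℕ) (μ : ℝ),
      Θ N μ = (1 - ρ N μ) * M + (1 + ρ N μ) * (κ * τ / (N + 1)) + μ) :
    ∀ θ : ℝ, 0 < θ → ∃ (N : ℕ) (μ : ℝ), 0 < μ ∧ Θ N μ ≤ θ ∧ 0 < ρ N μ :=
  stmt_0_general κ τ M ρ Θ hρ hΘ
end

section
/- Let l ∈ ℕ and equip ℝ^l with the sup norm ‖x‖ = max_i |x_i|. Let κ, τ, M, μ > 0, let N ∈ ℕ, set h = τ/(N+1), let ρ = 1 − max{μ/M, 2μ/(κh)}, and assume ρ ≥ 0. Then for every function d : [0,τ] → ℝ^l that is κ-Lipschitz and satisfies ‖d(t)‖ ≤ M for all t ∈ [0,τ], there exist points z_0, z_1, …, z_{N+1} ∈ ℝ^l such that: (a) every coordinate of every z_i is an integer multiple of 2μ; (b) ‖z_i‖ ≤ M for all i; (c) ‖z_{i+1} − z_i‖ ≤ κ·h for all i = 0, …, N; and (d) the piecewise-linear interpolation z : [0,τ] → ℝ^l defined by z(i·h + s) = z_i + (s/h)·(z_{i+1} − z_i) for s ∈ [0,h] satisfies ‖d(t) − z(t)‖ ≤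 (1 − ρ)·M + (1 + ρ)·κ·h + μ for all t ∈ [0,τ]. -/
set_option maxHeartbeats 1000000


/-- Approximation property of Theorem 3.6: every κ-Lipschitz disturbance bounded
by M admits a piecewise-linear spline approximation with node values on the
lattice 2μℤ^l, bounded by M, κh-close at consecutive nodes, and with sup-norm
error at most (1 − ρ)M + (1 + ρ)κh + μ. -/
theorem stmt_9 (l : ℕ) (κ τ M μ : ℝ) (hκ : 0 < κ) (hτ : 0 < τ) (hM : 0 < M) (hμ : 0 < μ)
    (N : ℕ) (h : ℝ) (hh : h = τ / (N + 1))
    (ρ : ℝ) (hρdef : ρ = 1 - max (μ / M) (2 * μ / (κ * h))) (hρ : 0 ≤ ρ)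
    (d : ℝ → (Fin l → ℝ))
    (hdLip : ∀ t₁ ∈ Set.Icc (0 : ℝ) τ, ∀ t₂ ∈ Set.Icc (0 : ℝ) τ,
      ‖d t₂ - d t₁‖ ≤ κ * |t₂ - t₁|)
    (hdM : ∀ t ∈ Set.Icc (0 : ℝ) τ, ‖d t‖ ≤ M) :
    ∃ z : ℕ → (Fin l → ℝ),
      (∀ i : ℕ, i ≤ N + 1 → ∀ j : Fin l, ∃ k : ℤ, z i j = 2 * μ * k) ∧
      (∀ i : ℕ, i ≤ N + 1 → ‖z i‖ ≤ M) ∧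
      (∀ i : ℕ, i ≤ N → ‖z (i + 1) - z i‖ ≤ κ * h) ∧
      (∀ i : ℕ, i ≤ N → ∀ s ∈ Set.Icc (0 : ℝ) h,
        ‖d ((i : ℝ) * h + s) - (z i + (s / h) • (z (i + 1) - z i))‖ ≤
          (1 - ρ) * M + (1 + ρ) * κ * h + μ) := by
  have hN1 : (0:ℝ) < (N:ℝ) + 1 := by positivity
  have hhpos : 0 < h := by rw [hh]; positivity
  have hκh : 0 < κ * h := mul_pos hκ hhpos
  have hτeq : ((N:ℝ) + 1) * h = τ := by rw [hh]; field_simp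
  have hmax : 1 - ρ = max (μ / M) (2 * μ / (κ * h)) := by rw [hρdef]; ring
  have h1 : μ / M ≤ 1 - ρ := by rw [hmax]; exact le_max_left _ _
  have h2 : 2 * μ / (κ * h) ≤ 1 - ρ := by rw [hmax]; exact le_max_right _ _
  have h1' : μ ≤ (1 - ρ) * M := by
    rw [div_le_iff₀ hM] at h1; linarith
  have h2' : 2 * μ ≤ (1 - ρ) * (κ * h) := by
    rw [div_le_iff₀ hκh] at h2; linarith
  -- the node values: rounded scaled samples
  set z : ℕ → (Fin l → ℝ) :=
    fun i j => 2 * μ * (round (ρ * d ((i:ℝ) * h) j / (2 * μ)) : ℤ) with hz_def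
  have hnode : ∀ i : ℕ, i ≤ N + 1 → (i:ℝ) * h ∈ Set.Icc (0:ℝ) τ := by
    intro i hi
    constructor
    · positivity
    · rw [← hτeq]
      have : (i:ℝ) ≤ (N:ℝ) + 1 := by exact_mod_cast hi
      nlinarith
  -- key approximation at nodes
  have hzapprox : ∀ i : ℕ, ‖ρ • d ((i:ℝ) * h) - z i‖ ≤ μ := by
    intro i
    rw [pi_norm_le_iff_of_nonneg hμ.le]
    intro j
    have hval : (ρ • d ((i:ℝ) * h) - z i) j
        = ρ * d ((i:ℝ) * h) j - 2 * μ * (round (ρ * d ((i:ℝ) * h) j / (2 * μ)) : ℤ) := by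
      simp [hz_def]
    rw [Real.norm_eq_abs, hval]
    set x := ρ * d ((i:ℝ) * h) j
    have h2μ : (2 * μ) ≠ 0 := by positivity
    have hrd : |x / (2 * μ) - (round (x / (2 * μ)) : ℤ)| ≤ 1 / 2 := abs_sub_round _
    have heq : x - 2 * μ * (round (x / (2 * μ)) : ℤ)
        = 2 * μ * (x / (2 * μ) - (round (x / (2 * μ)) : ℤ)) := by
      field_simp
    rw [heq, abs_mul, abs_of_pos (by positivity : (0:ℝ) < 2 * μ)]
    nlinarith
  have hdMnode : ∀ i : ℕ, i ≤ N + 1 → ‖d ((i:ℝ) * h)‖ ≤ M := fun i hi =>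
    hdM _ (hnode i hi)
  refine ⟨z, ?_, ?_, ?_, ?_⟩
  · intro i _ j
    exact ⟨round (ρ * d ((i:ℝ) * h) j / (2 * μ)), rfl⟩
  · -- bounded by M
    intro i hi
    have h3 : ‖ρ • d ((i:ℝ) * h)‖ = ρ * ‖d ((i:ℝ) * h)‖ := by
      rw [norm_smul, Real.norm_eq_abs, abs_of_nonneg hρ]
    calc ‖z i‖ = ‖ρ • d ((i:ℝ) * h) - (ρ • d ((i:ℝ) * h) - z i)‖ := by congr 1; abel
      _ ≤ ‖ρ • d ((i:ℝ) * h)‖ + ‖ρ • d ((i:ℝ) * h) - z i‖ := norm_sub_le _ _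
      _ ≤ ρ * M + μ := by
          have := hdMnode i hi
          have := hzapprox i
          rw [h3] at *
          nlinarith
      _ ≤ M := by nlinarith
  · -- consecutive closeness
    intro i hi
    have hcast : ((i+1 : ℕ):ℝ) = (i:ℝ) + 1 := by push_cast; ring
    have hLip : ‖d (((i:ℝ) + 1) * h) - d ((i:ℝ) * h)‖ ≤ κ * h := by
      have hmem : ((i:ℝ) + 1) * h ∈ Set.Icc (0:ℝ) τ := by
        have := hnode (i+1) (by omega); rwa [hcast] at this
      calc ‖d (((i:ℝ) + 1) * h) - d ((i:ℝ) * h)‖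
          ≤ κ * |((i:ℝ) + 1) * h - (i:ℝ) * h| := hdLip _ (hnode i (by omega)) _ hmem
        _ = κ * h := by rw [show ((i:ℝ) + 1) * h - (i:ℝ) * h = h by ring,
            abs_of_pos hhpos]
    have ha : ‖ρ • d (((i:ℝ)+1) * h) - z (i+1)‖ ≤ μ := by
      have := hzapprox (i+1); rwa [hcast] at this
    have hb := hzapprox i
    have hdec : z (i+1) - z i
        = -(ρ • d (((i:ℝ)+1) * h) - z (i+1)) + ρ • (d (((i:ℝ)+1) * h) - d ((i:ℝ) * h))
          + (ρ • d ((i:ℝ) * h) - z i) := by module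
    calc ‖z (i+1) - z i‖
        = ‖-(ρ • d (((i:ℝ)+1) * h) - z (i+1)) + ρ • (d (((i:ℝ)+1) * h) - d ((i:ℝ) * h))
          + (ρ • d ((i:ℝ) * h) - z i)‖ := by rw [hdec]
      _ ≤ ‖-(ρ • d (((i:ℝ)+1) * h) - z (i+1))‖
          + ‖ρ • (d (((i:ℝ)+1) * h) - d ((i:ℝ) * h))‖
          + ‖ρ • d ((i:ℝ) * h) - z i‖ := norm_add₃_le
      _ ≤ μ + ρ * (κ * h) + μ := by
          rw [norm_neg, norm_smul, Real.norm_eq_abs, abs_of_nonneg hρ]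
          have : ρ * ‖d (((i:ℝ)+1) * h) - d ((i:ℝ) * h)‖ ≤ ρ * (κ * h) :=
            mul_le_mul_of_nonneg_left hLip hρ
          linarith
      _ ≤ κ * h := by nlinarith
  · -- pointwise error bound
    intro i hi s hs
    obtain ⟨hs0, hsh⟩ := hs
    have hcast : ((i+1 : ℕ):ℝ) = (i:ℝ) + 1 := by push_cast; ring
    set t := (i:ℝ) * h + s with ht_def
    set lam := s / h with hlam_def
    have hlam0 : 0 ≤ lam := by positivity
    have hlam1 : lam ≤ 1 := by rw [hlam_def, div_le_one hhpos]; exact hsh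
    have hslam : lam * h = s := div_mul_cancel₀ s (ne_of_gt hhpos)
    have htmem : t ∈ Set.Icc (0:ℝ) τ := by
      constructor
      · have : 0 ≤ (i:ℝ) * h := by positivity
        linarith
      · rw [← hτeq]
        have hiN : (i:ℝ) ≤ (N:ℝ) := by exact_mod_cast hi
        nlinarith
    have hL1 : ‖d t - d ((i:ℝ) * h)‖ ≤ κ * s := by
      calc ‖d t - d ((i:ℝ) * h)‖ ≤ κ * |t - (i:ℝ) * h| :=
            hdLip _ (hnode i (by omega)) _ htmem
        _ = κ * s := by rw [show t - (i:ℝ) * h = s by rw [ht_def]; ring,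
            abs_of_nonneg hs0]
    have hL2 : ‖d t - d (((i:ℝ)+1) * h)‖ ≤ κ * (h - s) := by
      have hmem : ((i:ℝ) + 1) * h ∈ Set.Icc (0:ℝ) τ := by
        have := hnode (i+1) (by omega); rwa [hcast] at this
      calc ‖d t - d (((i:ℝ)+1) * h)‖ ≤ κ * |t - ((i:ℝ)+1) * h| :=
            hdLip _ hmem _ htmem
        _ = κ * (h - s) := by
            rw [show t - ((i:ℝ)+1) * h = -(h - s) by rw [ht_def]; ring, abs_neg,
              abs_of_nonneg (by linarith)]
    have ha : ‖ρ • d t - z i‖ ≤ ρ * (κ * s) + μ := by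
      have hdec : ρ • d t - z i
          = ρ • (d t - d ((i:ℝ) * h)) + (ρ • d ((i:ℝ) * h) - z i) := by module
      calc ‖ρ • d t - z i‖
          ≤ ‖ρ • (d t - d ((i:ℝ) * h))‖ + ‖ρ • d ((i:ℝ) * h) - z i‖ := by
            rw [hdec]; exact norm_add_le _ _
        _ ≤ ρ * (κ * s) + μ := by
            rw [norm_smul, Real.norm_eq_abs, abs_of_nonneg hρ]
            have := mul_le_mul_of_nonneg_left hL1 hρ
            have := hzapprox i
            linarith
    have hb : ‖ρ • d t - z (i+1)‖ ≤ ρ * (κ * (h - s)) + μ := by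
      have hza : ‖ρ • d (((i:ℝ)+1) * h) - z (i+1)‖ ≤ μ := by
        have := hzapprox (i+1); rwa [hcast] at this
      have hdec : ρ • d t - z (i+1)
          = ρ • (d t - d (((i:ℝ)+1) * h)) + (ρ • d (((i:ℝ)+1) * h) - z (i+1)) := by
        module
      calc ‖ρ • d t - z (i+1)‖
          ≤ ‖ρ • (d t - d (((i:ℝ)+1) * h))‖ + ‖ρ • d (((i:ℝ)+1) * h) - z (i+1)‖ := by
            rw [hdec]; exact norm_add_le _ _
        _ ≤ ρ * (κ * (h - s)) + μ := by
            rw [norm_smul, Real.norm_eq_abs, abs_of_nonneg hρ]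
            have := mul_le_mul_of_nonneg_left hL2 hρ
            linarith
    have hdM' : ‖d t‖ ≤ M := hdM _ htmem
    have hdec : d t - (z i + lam • (z (i+1) - z i))
        = (1 - ρ) • d t + (1 - lam) • (ρ • d t - z i) + lam • (ρ • d t - z (i+1)) := by
      module
    calc ‖d t - (z i + lam • (z (i+1) - z i))‖
        = ‖(1 - ρ) • d t + (1 - lam) • (ρ • d t - z i) + lam • (ρ • d t - z (i+1))‖ := by
          rw [hdec]
      _ ≤ ‖(1 - ρ) • d t‖ + ‖(1 - lam) • (ρ • d t - z i)‖
          + ‖lam • (ρ • d t - z (i+1))‖ := norm_add₃_le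
      _ ≤ (1 - ρ) * M + (1 - lam) * (ρ * (κ * s) + μ) + lam * (ρ * (κ * (h - s)) + μ) := by
          rw [norm_smul, norm_smul, norm_smul, Real.norm_eq_abs, Real.norm_eq_abs,
            Real.norm_eq_abs, abs_of_nonneg (by nlinarith : (0:ℝ) ≤ 1 - ρ),
            abs_of_nonneg (by linarith : (0:ℝ) ≤ 1 - lam), abs_of_nonneg hlam0]
          have e1 : (1 - ρ) * ‖d t‖ ≤ (1 - ρ) * M :=
            mul_le_mul_of_nonneg_left hdM' (by nlinarith)
          have e2 : (1 - lam) * ‖ρ • d t - z i‖ ≤ (1 - lam) * (ρ * (κ * s) + μ) :=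
            mul_le_mul_of_nonneg_left ha (by linarith)
          have e3 : lam * ‖ρ • d t - z (i+1)‖ ≤ lam * (ρ * (κ * (h - s)) + μ) :=
            mul_le_mul_of_nonneg_left hb hlam0
          linarith
      _ ≤ (1 - ρ) * M + (1 + ρ) * κ * h + μ := by
          have key : (1 - lam) * (ρ * (κ * s)) + lam * (ρ * (κ * (h - s))) ≤ (1 + ρ) * κ * h := by
            rw [← hslam]
            nlinarith [hκh.le, mul_nonneg hρ hκh.le,
              mul_nonneg (mul_nonneg hρ hκh.le) (sq_nonneg (2 * lam - 1))]
          nlinarith [key]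
end
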